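/- Let ψ ∈ H^∞ and φ ∈ Aut(𝔻) be such that ψ ∘ φ = ψ·g for some invertible element g of H^∞ (i.e., g ∈ H^∞ and there exists h ∈ H^∞ with g·h ≡ 1 on 𝔻). Then the composition operator C_φ, given by C_φ f = f ∘ φ, is a well-defined algebra automorphism (bijective, ℂ-linear, multiplicative self-map) of ψH^∞. -/

import Mathlib

open Complex Metric Set

local notation "𝔻" => Complex.UnitDisc

/-- The closed unit disc, as a subset of `ℂ`. -/
def cD : Set ℂ := Metric.closedBall 0 1

/-- A function on the open unit disc is analytic (holomorphic):
it is the restriction of a function differentiable on the open unit ball. -/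
def HolOn (f : 𝔻 → ℂ) : Prop :=
  ∃ F : ℂ → ℂ, DifferentiableOn ℂ F (Metric.ball 0 1) ∧ ∀ z : 𝔻, F ↑z = f z

/-- Membership in `H^∞`, the algebra of bounded analytic functions on the unit disc. -/
def MemHinf (f : 𝔻 → ℂ) : Prop :=
  HolOn f ∧ ∃ M : ℝ, ∀ z : 𝔻, ‖f z‖ ≤ M

/-- Membership in the disc algebra `A(𝔻)`: continuous on the closed unit disc,
analytic in its interior. -/
def MemDiscAlg (f : ↥cD → ℂ) : Prop :=
  ∃ F : ℂ → ℂ, ContinuousOn F cD ∧ DifferentiableOn ℂ F (Metric.ball 0 1) ∧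
    ∀ z : ↥cD, F ↑z = f z

/-- `φ ∈ Aut(𝔻)`: a bijective analytic self-map of the unit disc. -/
def IsDiscAut (φ : 𝔻 → 𝔻) : Prop :=
  (∃ F : ℂ → ℂ, DifferentiableOn ℂ F (Metric.ball 0 1) ∧ ∀ z : 𝔻, F ↑z = ↑(φ z)) ∧
  Function.Bijective φ

/-- A Möbius automorphism of the unit disc, given by its global formula
`Φ z = η (a - z) / (1 - conj a * z)` with `|a| < 1`, `|η| = 1`; this is the analytic
extension to (a neighbourhood of) the closed unit disc of a disc automorphism. -/
def IsMobius (Φ : ℂ → ℂ) : Prop :=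
  ∃ a η : ℂ, ‖a‖ < 1 ∧ ‖η‖ = 1 ∧
    ∀ z : ℂ, Φ z = η * (a - z) / (1 - (starRingEnd ℂ) a * z)

/-- `T` is an algebra automorphism of the set `A` of complex-valued functions:
a bijective, `ℂ`-linear and multiplicative self-map of `A`. -/
def IsAlgAutOn {ι : Type} (A : Set (ι → ℂ)) (T : (ι → ℂ) → (ι → ℂ)) : Prop :=
  (∀ f ∈ A, T f ∈ A) ∧
  (∀ f ∈ A, ∀ g ∈ A, T (f + g) = T f + T g) ∧
  (∀ (c : ℂ), ∀ f ∈ A, T (c • f) = c • T f) ∧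
  (∀ f ∈ A, ∀ g ∈ A, T (f * g) = T f * T g) ∧
  Set.InjOn T A ∧ Set.SurjOn T A A

/-- The subalgebra `ψ H^∞ = {ψ · g : g ∈ H^∞}`. -/
def psiH (ψ : 𝔻 → ℂ) : Set (𝔻 → ℂ) :=
  {f | ∃ g, MemHinf g ∧ f = fun z => ψ z * g z}

/-- The subalgebra `ψ A(𝔻) = {ψ · g : g ∈ A(𝔻)}`. -/
def psiA (ψ : ↥cD → ℂ) : Set (↥cD → ℂ) :=
  {f | ∃ g, MemDiscAlg g ∧ f = fun z => ψ z * g z}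

/-- The composition operator `C_φ : f ↦ f ∘ φ` is a well-defined algebra automorphism
of the set `A` (it is automatically linear and multiplicative). -/
def CompAutOn (A : Set (𝔻 → ℂ)) (φ : 𝔻 → 𝔻) : Prop :=
  (∀ f ∈ A, f ∘ φ ∈ A) ∧ Set.InjOn (fun f => f ∘ φ) A ∧ Set.SurjOn (fun f => f ∘ φ) A A

/-- The Möbius factor `τ_a(z) = (a - z)/(1 - conj a · z)`. -/
noncomputable def mobius (a z : ℂ) : ℂ := (a - z) / (1 - (starRingEnd ℂ) a * z)

/-- `f` has a zero of order (multiplicity) `k` at `w`: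
`f z = (z - w)^k g z` with `g` analytic and `g w ≠ 0`. -/
def ZeroOrderAt (f : 𝔻 → ℂ) (w : 𝔻) (k : ℕ) : Prop :=
  ∃ g : 𝔻 → ℂ, HolOn g ∧ g w ≠ 0 ∧ ∀ z : 𝔻, f z = ((z : ℂ) - (w : ℂ)) ^ k * g z

/-- `g` is an invertible element of `H^∞`. -/
def InvHinf (g : 𝔻 → ℂ) : Prop :=
  MemHinf g ∧ ∃ h : 𝔻 → ℂ, MemHinf h ∧ ∀ z, g z * h z = 1

/-- `g` is an invertible element of the disc algebra `A(𝔻)`. -/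
def InvDiscAlg (g : ↥cD → ℂ) : Prop :=
  MemDiscAlg g ∧ ∃ h : ↥cD → ℂ, MemDiscAlg h ∧ ∀ z, g z * h z = 1

/-!
If `f = ψ h` with `h ∈ H^∞`, then `f ∘ φ = ψ · (g · h ∘ φ)`, so `C_φ` maps `ψ H^∞` into itself;
it is injective because `φ` is onto. Its inverse is `C_{φ⁻¹}`, which preserves `ψ H^∞` by the
same computation with `g⁻¹ ∘ φ⁻¹` in place of `g`, once `φ⁻¹` is known to be holomorphic. That is
the inverse function theorem for injective holomorphic maps `F`: the inverse is continuous by the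
open mapping theorem, differentiable away from the critical values of `F`, which are isolated,
and hence holomorphic by Riemann's removable singularity theorem.
-/

open Filter Topology Function

section InverseFunction

theorem not_eventually_eq_of_injOn {X Y : Type*} [TopologicalSpace X] {F : X → Y} {U : Set X}
    {z : X} [(𝓝[≠] z).NeBot] (hU : U ∈ 𝓝 z) (hinj : InjOn F U) : ¬∀ᶠ w in 𝓝 z, F w = F z := by
  intro hconst
  obtain ⟨w, ⟨hwz, hwU⟩, hw⟩ :=
    ((eventually_nhdsWithin_of_eventually_nhds (hconst.and hU)).and
      (self_mem_nhdsWithin : {z}ᶜ ∈ 𝓝[≠] z)).exists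
  exact hw (hinj hwU (mem_of_mem_nhds hU) hwz)

theorem AnalyticAt.eventually_deriv_ne_zero {𝕜 E : Type*} [NontriviallyNormedField 𝕜]
    [CharZero 𝕜] [NormedAddCommGroup E] [NormedSpace 𝕜 E] [CompleteSpace E] {F : 𝕜 → E} {z : 𝕜}
    (hF : AnalyticAt 𝕜 F z) (hnc : ¬∀ᶠ w in 𝓝 z, F w = F z) :
    ∀ᶠ w in 𝓝[≠] z, deriv F w ≠ 0 := by
  refine hF.deriv.eventually_eq_zero_or_eventually_ne_zero.resolve_left fun hzero => hnc ?_
  have horder := hF.analyticOrderAt_deriv_add_one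
  rw [analyticOrderAt_eq_top.2 hzero, top_add, eq_comm, analyticOrderAt_eq_top] at horder
  exact horder.mono fun w hw => sub_eq_zero.1 hw

variable {F : ℂ → ℂ} {U : Set ℂ}

theorem nhds_le_map_nhds_of_injOn (hF : DifferentiableOn ℂ F U) (hU : IsOpen U)
    (hinj : InjOn F U) {z : ℂ} (hz : z ∈ U) : 𝓝 (F z) ≤ map F (𝓝 z) :=
  ((hF.analyticOnNhd hU) z hz).eventually_constant_or_nhds_le_map_nhds.resolve_left
    (not_eventually_eq_of_injOn (hU.mem_nhds hz) hinj)

theorem image_mem_nhds_of_injOn (hF : DifferentiableOn ℂ F U) (hU : IsOpen U)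
    (hinj : InjOn F U) {z : ℂ} (hz : z ∈ U) : F '' U ∈ 𝓝 (F z) :=
  nhds_le_map_nhds_of_injOn hF hU hinj hz (image_mem_map (hU.mem_nhds hz))

theorem continuousAt_invFunOn_of_injOn (hF : DifferentiableOn ℂ F U) (hU : IsOpen U)
    (hinj : InjOn F U) {z : ℂ} (hz : z ∈ U) : ContinuousAt (invFunOn F U) (F z) := by
  rw [ContinuousAt, hinj.leftInvOn_invFunOn hz]
  refine (tendsto_map'_iff.2 ?_).mono_left (nhds_le_map_nhds_of_injOn hF hU hinj hz)
  exact tendsto_id.congr'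
    (eventually_of_mem (hU.mem_nhds hz) fun y hy => (hinj.leftInvOn_invFunOn hy).symm)

theorem hasDerivAt_invFunOn_of_injOn (hF : DifferentiableOn ℂ F U) (hU : IsOpen U)
    (hinj : InjOn F U) {z : ℂ} (hz : z ∈ U) (hd : deriv F z ≠ 0) :
    HasDerivAt (invFunOn F U) (deriv F z)⁻¹ (F z) := by
  refine HasDerivAt.of_local_left_inverse (continuousAt_invFunOn_of_injOn hF hU hinj hz) ?_ hd
    (eventually_of_mem (image_mem_nhds_of_injOn hF hU hinj hz) fun w hw => invFunOn_eq hw)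
  rw [hinj.leftInvOn_invFunOn hz]
  exact (hF.differentiableAt (hU.mem_nhds hz)).hasDerivAt

theorem differentiableAt_invFunOn_of_injOn (hF : DifferentiableOn ℂ F U) (hU : IsOpen U)
    (hinj : InjOn F U) {z : ℂ} (hz : z ∈ U) : DifferentiableAt ℂ (invFunOn F U) (F z) := by
  have hcont := continuousAt_invFunOn_of_injOn hF hU hinj hz
  have himage : F '' U ∈ 𝓝[≠] (F z) :=
    mem_nhdsWithin_of_mem_nhds (image_mem_nhds_of_injOn hF hU hinj hz)
  have hpunct : Tendsto (invFunOn F U) (𝓝[≠] (F z)) (𝓝[≠] z) := by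
    refine tendsto_nhdsWithin_iff.2 ⟨?_, ?_⟩
    · have htendsto := hcont.tendsto
      rw [hinj.leftInvOn_invFunOn hz] at htendsto
      exact htendsto.mono_left nhdsWithin_le_nhds
    · filter_upwards [himage, self_mem_nhdsWithin] with w hw hwz hGw
      exact hwz ((invFunOn_eq hw).symm.trans (congrArg F hGw))
  have hcrit := (hF.analyticOnNhd hU z hz).eventually_deriv_ne_zero
    (not_eventually_eq_of_injOn (hU.mem_nhds hz) hinj)
  refine (Complex.analyticAt_of_differentiable_on_punctured_nhds_of_continuousAt ?_
    hcont).differentiableAt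
  filter_upwards [hpunct.eventually hcrit, himage] with w hd hw
  have hderiv := hasDerivAt_invFunOn_of_injOn hF hU hinj (invFunOn_mem hw) hd
  rw [invFunOn_eq hw] at hderiv
  exact hderiv.differentiableAt

theorem differentiableOn_invFunOn_image_of_injOn (hF : DifferentiableOn ℂ F U) (hU : IsOpen U)
    (hinj : InjOn F U) : DifferentiableOn ℂ (invFunOn F U) (F '' U) := by
  rintro _ ⟨z, hz, rfl⟩
  exact (differentiableAt_invFunOn_of_injOn hF hU hinj hz).differentiableWithinAt

end InverseFunction

theorem range_coe_unitDisc : range ((↑) : 𝔻 → ℂ) = ball 0 1 :=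
  Subtype.range_coe

theorem MemHinf.mul {f g : 𝔻 → ℂ} (hf : MemHinf f) (hg : MemHinf g) :
    MemHinf fun z => f z * g z := by
  obtain ⟨⟨F, hFd, hFe⟩, M, hM⟩ := hf
  obtain ⟨⟨G, hGd, hGe⟩, N, hN⟩ := hg
  refine ⟨⟨F * G, hFd.mul hGd, fun z => by simp [hFe, hGe]⟩, M * N, fun z => ?_⟩
  rw [norm_mul]
  exact mul_le_mul (hM z) (hN z) (norm_nonneg _) ((norm_nonneg _).trans (hM z))

theorem MemHinf.comp {f : 𝔻 → ℂ} {χ : 𝔻 → 𝔻} (hf : MemHinf f) (hχ : HolOn fun z => (χ z : ℂ)) :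
    MemHinf (f ∘ χ) := by
  obtain ⟨⟨F, hFd, hFe⟩, M, hM⟩ := hf
  obtain ⟨C, hCd, hCe⟩ := hχ
  have hmaps : MapsTo C (ball 0 1) (ball 0 1) := by
    rw [← range_coe_unitDisc]
    rintro _ ⟨z, rfl⟩
    exact ⟨χ z, (hCe z).symm⟩
  exact ⟨⟨F ∘ C, hFd.comp hCd hmaps, fun z => by simp [hCe, hFe]⟩, M, fun z => hM (χ z)⟩

theorem IsDiscAut.holOn_symm {φ : 𝔻 → 𝔻} (hφ : IsDiscAut φ) :
    HolOn fun z => ((Equiv.ofBijective φ hφ.2).symm z : ℂ) := by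
  obtain ⟨⟨F, hFd, hFe⟩, hbij⟩ := hφ
  have hFcoe : F ∘ (↑) = (↑) ∘ φ := funext hFe
  have hinj : InjOn F (ball 0 1) := by
    rw [← range_coe_unitDisc]
    refine Injective.injOn_range ?_
    rw [hFcoe]
    exact UnitDisc.coe_injective.comp hbij.1
  have himage : F '' ball 0 1 = ball 0 1 := by
    rw [← range_coe_unitDisc, ← range_comp, hFcoe, range_comp, hbij.2.range_eq, image_univ]
  have hdiff := differentiableOn_invFunOn_image_of_injOn hFd isOpen_ball hinj
  rw [himage] at hdiff
  refine ⟨invFunOn F (ball 0 1), hdiff, fun z => ?_⟩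
  set e := Equiv.ofBijective φ hbij
  calc invFunOn F (ball 0 1) z = invFunOn F (ball 0 1) (F (e.symm z)) := by
        rw [hFe, Equiv.ofBijective_apply_symm_apply φ hbij]
    _ = e.symm z := hinj.leftInvOn_invFunOn (range_coe_unitDisc ▸ mem_range_self _)

theorem comp_mem_psiH {ψ c : 𝔻 → ℂ} {χ : 𝔻 → 𝔻} (hχ : HolOn fun z => (χ z : ℂ))
    (hc : MemHinf c) (hψ : ∀ z, ψ (χ z) = ψ z * c z) {f : 𝔻 → ℂ} (hf : f ∈ psiH ψ) :
    f ∘ χ ∈ psiH ψ := by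
  obtain ⟨h, hh, rfl⟩ := hf
  refine ⟨fun z => c z * h (χ z), hc.mul (hh.comp hχ), funext fun z => ?_⟩
  simp only [comp_apply, hψ, mul_assoc]

theorem stmt_9_general (ψ : 𝔻 → ℂ) (φ : 𝔻 → 𝔻) (hφ : IsDiscAut φ)
    (g : 𝔻 → ℂ) (hg : InvHinf g) (heq : ∀ z, ψ (φ z) = ψ z * g z) :
    CompAutOn (psiH ψ) φ := by
  obtain ⟨hgH, k, hk, hgk⟩ := hg
  set e := Equiv.ofBijective φ hφ.2
  have heq_symm : ∀ z, ψ (e.symm z) = ψ z * k (e.symm z) := fun z =>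
    calc ψ (e.symm z) = ψ (e.symm z) * g (e.symm z) * k (e.symm z) := by
          rw [mul_assoc, hgk, mul_one]
      _ = ψ z * k (e.symm z) := by
          rw [← heq, Equiv.ofBijective_apply_symm_apply φ hφ.2]
  refine ⟨fun f hf => comp_mem_psiH hφ.1 hgH heq hf, hφ.2.2.injective_comp_right.injOn,
    fun f hf => ⟨f ∘ e.symm, comp_mem_psiH hφ.holOn_symm (hk.comp hφ.holOn_symm) heq_symm hf, ?_⟩⟩
  funext z
  exact congrArg f (Equiv.ofBijective_symm_apply_apply φ hφ.2 z)

/-- if `ψ ∈ H^∞`, `φ ∈ Aut(𝔻)` and `ψ ∘ φ = ψ · g` for some invertible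
element `g` of `H^∞`, then `C_φ` is a well-defined algebra automorphism of `ψ H^∞`. -/
theorem stmt_9 (ψ : 𝔻 → ℂ) (hψ : MemHinf ψ) (φ : 𝔻 → 𝔻) (hφ : IsDiscAut φ)
    (g : 𝔻 → ℂ) (hg : InvHinf g) (heq : ∀ z, ψ (φ z) = ψ z * g z) :
    CompAutOn (psiH ψ) φ :=
  stmt_9_general ψ φ hφ g hg heq
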